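/- Let n, m ≥ 1 with m ≠ n, and consider the quiver 1 → 3 ← 2 with dimension vector (n₁, n₂, n₃) = (m, n, n). A weight σ = (σ₁, σ₂, σ₃) ∈ ℤ³ admits a nonzero semi-invariant polynomial if and only if σ₁ = 0, σ₂ ≥ 0, and σ₂ + σ₃ = 0. -/

import Mathlib

/-- Variables: entries of the matrix pair `(A, B)` with `A : n₃ × n₁` and `B : n₃ × n₂`. -/
abbrev TriVars (n₁ n₂ n₃ : ℕ) := (Fin n₃ × Fin n₁) ⊕ (Fin n₃ × Fin n₂)

/-- Evaluate a polynomial in the matrix entries at `(A, B)`. -/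
noncomputable def triEval {n₁ n₂ n₃ : ℕ} (f : MvPolynomial (TriVars n₁ n₂ n₃) ℂ)
    (A : Matrix (Fin n₃) (Fin n₁) ℂ) (B : Matrix (Fin n₃) (Fin n₂) ℂ) : ℂ :=
  MvPolynomial.eval (Sum.elim (fun p => A p.1 p.2) (fun p => B p.1 p.2)) f

/-- `f` is a semi-invariant of weight `(σ₁, σ₂, σ₃)` for the quiver `1 → 3 ← 2`. -/
def IsTriSemiInvariant {n₁ n₂ n₃ : ℕ} (σ₁ σ₂ σ₃ : ℤ)
    (f : MvPolynomial (TriVars n₁ n₂ n₃) ℂ) : Prop :=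
  ∀ (g₁ : (Matrix (Fin n₁) (Fin n₁) ℂ)ˣ) (g₂ : (Matrix (Fin n₂) (Fin n₂) ℂ)ˣ)
    (g₃ : (Matrix (Fin n₃) (Fin n₃) ℂ)ˣ)
    (A : Matrix (Fin n₃) (Fin n₁) ℂ) (B : Matrix (Fin n₃) (Fin n₂) ℂ),
    triEval f ((g₃ : Matrix (Fin n₃) (Fin n₃) ℂ) * A * (g₁⁻¹ : Matrix (Fin n₁) (Fin n₁) ℂ))
              ((g₃ : Matrix (Fin n₃) (Fin n₃) ℂ) * B * (g₂⁻¹ : Matrix (Fin n₂) (Fin n₂) ℂ))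
      = (g₁ : Matrix (Fin n₁) (Fin n₁) ℂ).det ^ (-σ₁)
        * (g₂ : Matrix (Fin n₂) (Fin n₂) ℂ).det ^ (-σ₂)
        * (g₃ : Matrix (Fin n₃) (Fin n₃) ℂ).det ^ (-σ₃)
        * triEval f A B

/-!
Scalar triples `(t, t, t)` act trivially, and scaling `B` shows that a semi-invariant is
homogeneous of degree `n σ₂` in `B`; hence `m σ₁ + n (σ₂ + σ₃) = 0` and `σ₂ ≥ 0`. The missing
relation comes from stabilisers: at a point `(A, B)` where `f` does not vanish, the character must
be trivial on every group element fixing `(A, B)`. If `m > n`, then `A` has a kernel vector `u`, and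
`g₁ = 1 + u wᵀ` fixes `A` with `det g₁ = 2`, forcing `σ₁ = 0`. If `m < n`, then `A` has a left
kernel vector `v`; for invertible `B`, the pair `g₃ = 1 + w vᵀ`, `g₂ = B⁻¹ g₃ B` fixes `(A, B)`,
forcing `σ₂ + σ₃ = 0`. Conversely, `det B ^ σ₂` has weight `(0, σ₂, -σ₂)`.
-/

open Matrix MvPolynomial

lemma Complex.two_zpow_eq_one_iff {e : ℤ} : (2 : ℂ) ^ e = 1 ↔ e = 0 := by
  rw [← Complex.ofReal_ofNat, ← Complex.ofReal_zpow, Complex.ofReal_eq_one]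
  exact zpow_eq_one_iff_right₀ zero_le_two (by norm_num)

lemma Polynomial.nonneg_of_forall_eval_eq_zpow_mul {K : Type*} [Field K] [Infinite K]
    {P : Polynomial K} {e : ℤ} {c : K} (hc : c ≠ 0) (h : ∀ s ≠ 0, P.eval s = s ^ e * c) :
    0 ≤ e := by
  by_contra! he
  obtain ⟨k, rfl⟩ : ∃ k : ℕ, e = -(k + 1 : ℕ) := ⟨(-e - 1).toNat, by omega⟩
  have hQ : X ^ (k + 1) * P - C c = 0 := by
    refine Polynomial.eq_zero_of_infinite_isRoot _ <|
      Set.Infinite.mono (fun s (hs : s ≠ 0) => ?_) (Set.finite_singleton 0).infinite_compl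
    simp only [Set.mem_ofPred_eq, Polynomial.IsRoot, Polynomial.eval_sub, Polynomial.eval_mul,
      Polynomial.eval_pow, Polynomial.eval_X, Polynomial.eval_C, h s hs, _root_.zpow_neg,
      zpow_natCast]
    field_simp
    ring
  simpa [hc] using congrArg (Polynomial.eval 0) hQ

namespace Matrix

variable {m n K : Type*} [Fintype m] [Fintype n] [Field K]

lemma exists_mulVec_eq_zero_of_card_lt (A : Matrix m n K)
    (h : Fintype.card m < Fintype.card n) : ∃ v ≠ 0, A *ᵥ v = 0 := by
  obtain ⟨v, hv, hv0⟩ := (Submodule.ne_bot_iff _).mp <|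
    LinearMap.ker_ne_bot_of_finrank_lt (f := A.mulVecLin) (by simpa using h)
  exact ⟨v, hv0, hv⟩

lemma exists_dotProduct_eq_one {u : n → K} (hu : u ≠ 0) : ∃ w, w ⬝ᵥ u = 1 := by
  classical
  obtain ⟨i, hi⟩ := Function.ne_iff.mp hu
  exact ⟨Pi.single i (u i)⁻¹, by simpa [single_dotProduct] using inv_mul_cancel₀ hi⟩

lemma det_one_add_vecMulVec [DecidableEq n] (u v : n → K) :
    det (1 + vecMulVec u v) = 1 + v ⬝ᵥ u := by
  rw [vecMulVec_eq Unit, det_one_add_replicateCol_mul_replicateRow]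

end Matrix

section triEval

variable {n₁ n₂ n₃ : ℕ}

lemma exists_triEval_ne_zero {f : MvPolynomial (TriVars n₁ n₂ n₃) ℂ} (hf : f ≠ 0) :
    ∃ A B, triEval f A B ≠ 0 := by
  obtain ⟨x, hx⟩ : ∃ x, eval x f ≠ 0 := by
    by_contra! h
    exact hf (MvPolynomial.funext fun x => by simp [h x])
  refine ⟨of fun i j => x (.inl (i, j)), of fun i j => x (.inr (i, j)), ?_⟩
  convert hx using 2
  rw [triEval]
  congr 2
  ext (⟨i, j⟩ | ⟨i, j⟩) <;> rfl

lemma exists_polynomial_eval_eq_triEval_smul (f : MvPolynomial (TriVars n₁ n₂ n₃) ℂ)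
    (A : Matrix (Fin n₃) (Fin n₁) ℂ) (B : Matrix (Fin n₃) (Fin n₂) ℂ) :
    ∃ P : Polynomial ℂ, ∀ s, P.eval s = triEval f A (s • B) := by
  refine ⟨eval₂ Polynomial.C (Sum.elim (fun p => Polynomial.C (A p.1 p.2))
    (fun p => Polynomial.C (B p.1 p.2) * Polynomial.X)) f, fun s => ?_⟩
  induction f using MvPolynomial.induction_on with
  | C a => simp [triEval]
  | add p q hp hq => simp_all [triEval]
  | mul_X p i hp =>
    rcases i with ⟨i, j⟩ | ⟨i, j⟩ <;> simp_all [triEval, mul_comm s]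

lemma triEval_mul (f g : MvPolynomial (TriVars n₁ n₂ n₃) ℂ) (A B) :
    triEval (f * g) A B = triEval f A B * triEval g A B :=
  map_mul _ _ _

lemma triEval_pow (f : MvPolynomial (TriVars n₁ n₂ n₃) ℂ) (k : ℕ) (A B) :
    triEval (f ^ k) A B = triEval f A B ^ k :=
  map_pow _ _ _

end triEval

noncomputable def detB (n₁ n : ℕ) : MvPolynomial (TriVars n₁ n n) ℂ :=
  (of fun i j => X (.inr (i, j))).det

lemma triEval_detB {n₁ n : ℕ} (A : Matrix (Fin n) (Fin n₁) ℂ) (B : Matrix (Fin n) (Fin n) ℂ) :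
    triEval (detB n₁ n) A B = B.det := by
  rw [triEval, detB, RingHom.map_det]
  congr 1
  ext i j
  simp [RingHom.mapMatrix_apply]

lemma detB_ne_zero {n₁ n : ℕ} : detB n₁ n ≠ 0 := fun h => by
  have h1 := triEval_detB (0 : Matrix (Fin n) (Fin n₁) ℂ) 1
  rw [h, triEval, map_zero, det_one] at h1
  exact zero_ne_one h1

namespace IsTriSemiInvariant

variable {n₁ n₂ n₃ : ℕ} {σ₁ σ₂ σ₃ : ℤ} {f : MvPolynomial (TriVars n₁ n₂ n₃) ℂ}

lemma apply_of_det_ne_zero (hf : IsTriSemiInvariant σ₁ σ₂ σ₃ f)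
    {g₁ : Matrix (Fin n₁) (Fin n₁) ℂ} {g₂ : Matrix (Fin n₂) (Fin n₂) ℂ}
    {g₃ : Matrix (Fin n₃) (Fin n₃) ℂ} (h₁ : g₁.det ≠ 0) (h₂ : g₂.det ≠ 0) (h₃ : g₃.det ≠ 0)
    (A : Matrix (Fin n₃) (Fin n₁) ℂ) (B : Matrix (Fin n₃) (Fin n₂) ℂ) :
    triEval f (g₃ * A * g₁⁻¹) (g₃ * B * g₂⁻¹)
      = g₁.det ^ (-σ₁) * g₂.det ^ (-σ₂) * g₃.det ^ (-σ₃) * triEval f A B :=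
  hf ((isUnit_iff_isUnit_det _).mpr h₁.isUnit).unit
    ((isUnit_iff_isUnit_det _).mpr h₂.isUnit).unit
    ((isUnit_iff_isUnit_det _).mpr h₃.isUnit).unit A B

lemma weight_relation_of_fixes (hf : IsTriSemiInvariant σ₁ σ₂ σ₃ f)
    {A : Matrix (Fin n₃) (Fin n₁) ℂ} {B : Matrix (Fin n₃) (Fin n₂) ℂ}
    (hAB : triEval f A B ≠ 0) {a b c : ℕ}
    {g₁ : Matrix (Fin n₁) (Fin n₁) ℂ} {g₂ : Matrix (Fin n₂) (Fin n₂) ℂ}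
    {g₃ : Matrix (Fin n₃) (Fin n₃) ℂ} (h₁ : g₁.det = 2 ^ a) (h₂ : g₂.det = 2 ^ b)
    (h₃ : g₃.det = 2 ^ c) (hA : g₃ * A = A * g₁) (hB : g₃ * B = B * g₂) :
    a * σ₁ + b * σ₂ + c * σ₃ = 0 := by
  have hu₁ : IsUnit g₁.det := by simp [h₁]
  have hu₂ : IsUnit g₂.det := by simp [h₂]
  have hfix := hf.apply_of_det_ne_zero (g₃ := g₃) hu₁.ne_zero hu₂.ne_zero (by simp [h₃]) A B
  rw [hA, hB, mul_nonsing_inv_cancel_right _ _ hu₁, mul_nonsing_inv_cancel_right _ _ hu₂, h₁, h₂,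
    h₃] at hfix
  have hchar : (2 : ℂ) ^ (-(a * σ₁ + b * σ₂ + c * σ₃)) = 1 := by
    rw [← (mul_eq_right₀ hAB).mp hfix.symm]
    simp only [← zpow_natCast (2 : ℂ), ← _root_.zpow_mul]
    rw [← zpow_add₀ two_ne_zero, ← zpow_add₀ two_ne_zero]
    ring_nf
  exact neg_eq_zero.mp (Complex.two_zpow_eq_one_iff.mp hchar)

lemma sum_dim_mul_weight_eq_zero (hf : IsTriSemiInvariant σ₁ σ₂ σ₃ f) (hf0 : f ≠ 0) :
    n₁ * σ₁ + n₂ * σ₂ + n₃ * σ₃ = 0 := by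
  obtain ⟨A, B, hAB⟩ := exists_triEval_ne_zero hf0
  exact hf.weight_relation_of_fixes hAB (g₁ := (2 : ℂ) • 1) (g₂ := (2 : ℂ) • 1)
    (g₃ := (2 : ℂ) • 1) (by simp) (by simp) (by simp) (by simp) (by simp)

lemma triEval_smul_right (hf : IsTriSemiInvariant σ₁ σ₂ σ₃ f) (A : Matrix (Fin n₃) (Fin n₁) ℂ)
    (B : Matrix (Fin n₃) (Fin n₂) ℂ) {s : ℂ} (hs : s ≠ 0) :
    triEval f A (s • B) = s ^ (n₂ * σ₂) * triEval f A B := by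
  have hinv : (s⁻¹ • 1 : Matrix (Fin n₂) (Fin n₂) ℂ)⁻¹ = s • 1 :=
    inv_eq_left_inv (by simp [smul_smul, hs])
  have := hf.apply_of_det_ne_zero (g₁ := 1) (g₂ := s⁻¹ • 1) (g₃ := 1) (by simp) (by simp [hs])
    (by simp) A B
  rw [hinv] at this
  simpa [_root_.zpow_mul] using this

lemma nonneg_dim_mul_weight₂ (hf : IsTriSemiInvariant σ₁ σ₂ σ₃ f) (hf0 : f ≠ 0) :
    0 ≤ n₂ * σ₂ := by
  obtain ⟨A, B, hAB⟩ := exists_triEval_ne_zero hf0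
  obtain ⟨P, hP⟩ := exists_polynomial_eval_eq_triEval_smul f A B
  exact Polynomial.nonneg_of_forall_eval_eq_zpow_mul hAB fun s hs =>
    (hP s).trans (hf.triEval_smul_right A B hs)

lemma weight₁_eq_zero_of_lt (hf : IsTriSemiInvariant σ₁ σ₂ σ₃ f) (hf0 : f ≠ 0) (h : n₃ < n₁) :
    σ₁ = 0 := by
  obtain ⟨A, B, hAB⟩ := exists_triEval_ne_zero hf0
  obtain ⟨u, hu, hAu⟩ := A.exists_mulVec_eq_zero_of_card_lt (by simpa using h)
  obtain ⟨w, hw⟩ := exists_dotProduct_eq_one hu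
  simpa using hf.weight_relation_of_fixes hAB (g₁ := 1 + vecMulVec u w) (g₂ := 1) (g₃ := 1)
    (a := 1) (b := 0) (c := 0) (by rw [det_one_add_vecMulVec, hw]; norm_num) (by simp) (by simp)
    (by rw [Matrix.mul_add, mul_vecMulVec, hAu]; simp) (by simp)

end IsTriSemiInvariant

lemma IsTriSemiInvariant.weight₂_add_weight₃_eq_zero_of_lt {n₁ n : ℕ} {σ₁ σ₂ σ₃ : ℤ}
    {f : MvPolynomial (TriVars n₁ n n) ℂ} (hf : IsTriSemiInvariant σ₁ σ₂ σ₃ f) (hf0 : f ≠ 0)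
    (h : n₁ < n) : σ₂ + σ₃ = 0 := by
  obtain ⟨A, B, hAB⟩ := exists_triEval_ne_zero (mul_ne_zero hf0 detB_ne_zero)
  rw [triEval_mul, triEval_detB] at hAB
  obtain ⟨hfAB, hB⟩ := mul_ne_zero_iff.mp hAB
  obtain ⟨v, hv, hvA⟩ := Aᵀ.exists_mulVec_eq_zero_of_card_lt (by simpa using h)
  rw [mulVec_transpose] at hvA
  obtain ⟨w, hw⟩ := exists_dotProduct_eq_one hv
  have hg : (1 + vecMulVec w v).det = 2 ^ 1 := by
    rw [det_one_add_vecMulVec, dotProduct_comm, hw]; norm_num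
  have hBu : IsUnit B := (isUnit_iff_isUnit_det B).mpr hB.isUnit
  simpa using hf.weight_relation_of_fixes hfAB (g₁ := 1) (g₂ := B⁻¹ * (1 + vecMulVec w v) * B)
    (g₃ := 1 + vecMulVec w v) (a := 0) (b := 1) (c := 1) (by simp) (by rw [det_conj' hBu, hg]) hg
    (by ext; simp [Matrix.add_mul, vecMulVec_mul, hvA, vecMulVec_apply])
    (by rw [← mul_assoc, ← mul_assoc, mul_nonsing_inv _ hB.isUnit, one_mul])

lemma isTriSemiInvariant_detB_pow (n₁ n k : ℕ) :
    IsTriSemiInvariant 0 k (-k) (detB n₁ n ^ k) := by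
  intro g₁ g₂ g₃ A B
  simp only [triEval_pow, triEval_detB, det_mul, det_nonsing_inv, Ring.inverse_eq_inv', neg_zero,
    zpow_zero, _root_.zpow_neg, zpow_natCast, one_mul, neg_neg]
  ring

/-- for the quiver `1 → 3 ← 2` with dimension vector `(m, n, n)` where `m ≠ n`,
a weight `(σ₁, σ₂, σ₃)` admits a nonzero semi-invariant iff `σ₁ = 0`, `σ₂ ≥ 0`, `σ₂ + σ₃ = 0`. -/
theorem tri_semiinvariant_iff_mnn (n m : ℕ) (hn : 1 ≤ n) (hm : 1 ≤ m) (hnm : m ≠ n)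
    (σ₁ σ₂ σ₃ : ℤ) :
    (∃ f : MvPolynomial (TriVars m n n) ℂ, f ≠ 0 ∧ IsTriSemiInvariant σ₁ σ₂ σ₃ f)
      ↔ (σ₁ = 0 ∧ 0 ≤ σ₂ ∧ σ₂ + σ₃ = 0) := by
  constructor
  · rintro ⟨f, hf0, hf⟩
    have hsum := hf.sum_dim_mul_weight_eq_zero hf0
    have h₂ : 0 ≤ σ₂ := nonneg_of_mul_nonneg_right (hf.nonneg_dim_mul_weight₂ hf0) (by omega)
    rcases hnm.lt_or_gt with hlt | hgt
    · have h₂₃ := hf.weight₂_add_weight₃_eq_zero_of_lt hf0 hlt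
      have h₁ : (m : ℤ) * σ₁ = 0 := by linear_combination hsum - n * h₂₃
      exact ⟨(mul_eq_zero.mp h₁).resolve_left (by omega), h₂, h₂₃⟩
    · have h₁ := hf.weight₁_eq_zero_of_lt hf0 hgt
      have h₂₃ : (n : ℤ) * (σ₂ + σ₃) = 0 := by linear_combination hsum - m * h₁
      exact ⟨h₁, h₂, (mul_eq_zero.mp h₂₃).resolve_left (by omega)⟩
  · rintro ⟨rfl, h₂, h₂₃⟩
    lift σ₂ to ℕ using h₂
    obtain rfl : σ₃ = -σ₂ := by omega
    exact ⟨_, pow_ne_zero _ detB_ne_zero, isTriSemiInvariant_detB_pow m n σ₂⟩
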